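/- |ker(γ)| = |(O_L^×/(O_L^×)²)_{N=□}| · |Ṽ| · |sgn(O_K^×)| / |sgn(O_L^×)·Ṽ|. -/

import Mathlib

/- Common setup: `K` is a number field and `L/K` a cubic extension (arising as
`K[x]/(F)` for a monic irreducible cubic `F` over `𝓞 K`).  For each real embedding
`σ` of `K`, `dst σ` is the distinguished real embedding of `L` above `σ`
(corresponding to the real root of `F`, resp. the smallest real root `γ₁`). -/

open NumberField Polynomial
open scoped nonZeroDivisors

noncomputable section

namespace Paper

/-- The sign of a nonzero real number, as an element of `ℤˣ`. -/
def sgnAux (x : ℝ) : ℤˣ := if 0 < x then 1 else -1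

lemma sgnAux_mul {x y : ℝ} (hx : x ≠ 0) (hy : y ≠ 0) :
    sgnAux (x * y) = sgnAux x * sgnAux y := by
  rcases hx.lt_or_gt with h | h <;> rcases hy.lt_or_gt with h' | h' <;>
    unfold sgnAux
  · rw [if_pos (mul_pos_of_neg_of_neg h h'), if_neg (not_lt.2 h.le), if_neg (not_lt.2 h'.le)]
    decide
  · rw [if_neg (not_lt.2 (mul_neg_of_neg_of_pos h h').le), if_neg (not_lt.2 h.le), if_pos h']
    decide
  · rw [if_neg (not_lt.2 (mul_neg_of_pos_of_neg h h').le), if_pos h, if_neg (not_lt.2 h'.le)]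
    decide
  · rw [if_pos (mul_pos h h'), if_pos h, if_pos h']
    decide

variable (L : Type) [Field L] [NumberField L]

/-- The sign map `L^× → ∏_{real embeddings of L} {±1}`. -/
def sgn : Lˣ →* ((L →+* ℝ) → ℤˣ) where
  toFun α := fun τ => sgnAux (τ (α : L))
  map_one' := by
    funext τ
    simp [sgnAux]
  map_mul' α β := by
    funext τ
    have hα : τ (α : L) ≠ 0 := (map_ne_zero τ).mpr α.ne_zero
    have hβ : τ (β : L) ≠ 0 := (map_ne_zero τ).mpr β.ne_zero
    have h : τ ((α * β : Lˣ) : L) = τ (α : L) * τ (β : L) := by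
      rw [Units.val_mul, map_mul]
    show sgnAux (τ ((α * β : Lˣ) : L)) = sgnAux (τ (α : L)) * sgnAux (τ (β : L))
    rw [h, sgnAux_mul hα hβ]

variable (K : Type) [Field K] [Algebra K L]

/-- The set of real embeddings of `L` extending a given real embedding of `K`. -/
def extSet (σ : K →+* ℝ) : Set (L →+* ℝ) := {τ | τ.comp (algebraMap K L) = σ}

variable (dst : (K →+* ℝ) → (L →+* ℝ))

/-- The group `Ṽ = ∏_{v ∈ A} {1} × ∏_{v ∈ B} {(1,1,1),(1,-1,-1)}`:  at each real
place of `K`, the component at the distinguished place `ṽ` is `1` and the product of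
all components above `v` is `1`. -/
def Vt : Subgroup ((L →+* ℝ) → ℤˣ) where
  carrier := {g | ∀ σ : K →+* ℝ, g (dst σ) = 1 ∧ (∏ᶠ τ ∈ extSet L K σ, g τ) = 1}
  one_mem' := by
    intro σ
    constructor
    · rfl
    · simp
  mul_mem' := by
    intro g h hg hh σ
    refine ⟨by rw [Pi.mul_apply, (hg σ).1, (hh σ).1, one_mul], ?_⟩
    have hfin : (extSet L K σ).Finite := Set.toFinite _
    calc (∏ᶠ τ ∈ extSet L K σ, (g * h) τ)
        = (∏ᶠ τ ∈ extSet L K σ, g τ) * ∏ᶠ τ ∈ extSet L K σ, h τ :=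
          finprod_mem_mul_distrib hfin
      _ = 1 := by rw [(hg σ).2, (hh σ).2, one_mul]
  inv_mem' := by
    intro g hg
    have : g⁻¹ = g := by
      funext τ
      exact Int.units_inv_eq_self (g τ)
    rw [this]
    exact hg

/-- The group `Ṽ' = ∏_{v ∈ A} {±1} × ∏_{v ∈ B} {(1,1,1),(1,-1,-1),(-1,1,1),(-1,-1,-1)}`:
at each real place `v` of `K`, the product of all the components above `v` equals the
component at the distinguished place `ṽ`. -/
def Vt' : Subgroup ((L →+* ℝ) → ℤˣ) where
  carrier := {g | ∀ σ : K →+* ℝ, (∏ᶠ τ ∈ extSet L K σ, g τ) = g (dst σ)}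
  one_mem' := by
    intro σ
    simp
  mul_mem' := by
    intro g h hg hh σ
    have hfin : (extSet L K σ).Finite := Set.toFinite _
    calc (∏ᶠ τ ∈ extSet L K σ, (g * h) τ)
        = (∏ᶠ τ ∈ extSet L K σ, g τ) * ∏ᶠ τ ∈ extSet L K σ, h τ :=
          finprod_mem_mul_distrib hfin
      _ = (g * h) (dst σ) := by rw [hg σ, hh σ]; rfl
  inv_mem' := by
    intro g hg
    have : g⁻¹ = g := by
      funext τ
      exact Int.units_inv_eq_self (g τ)
    rw [this]
    exact hg

/-- `P_L^∞ = sgn⁻¹(Ṽ)`; equivalently, the group of `α ∈ L^×` such that `ṽ(α) > 0` and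
`v(N(α)) > 0` for all real places `v` of `K`. -/
def Pinf : Subgroup Lˣ := (Vt L K dst).comap (sgn L)

/-- `P_L^0 = sgn⁻¹(Ṽ')`; equivalently, the group of `α ∈ L^×` such that
`ṽ₂(α)ṽ₃(α) > 0` for all unramified real places `v` of `K`. -/
def P0 : Subgroup Lˣ := (Vt' L K dst).comap (sgn L)

/-- The group of totally positive elements of a number field. -/
def Ppos : Subgroup Lˣ where
  carrier := {α | ∀ τ : L →+* ℝ, 0 < τ (α : L)}
  one_mem' := by intro τ; simp
  mul_mem' := by
    intro α β hα hβ τ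
    rw [Units.val_mul, map_mul]
    exact mul_pos (hα τ) (hβ τ)
  inv_mem' := by
    intro α hα τ
    rw [Units.val_inv_eq_inv_val, map_inv₀]
    exact inv_pos.2 (hα τ)

/-- The 2-torsion subgroup `G[2]` of a commutative group `G`. -/
def twoTorsion (G : Type*) [CommGroup G] : Subgroup G where
  carrier := {x | x ^ 2 = 1}
  one_mem' := one_pow 2
  mul_mem' := by
    intro a b ha hb
    show (a * b) ^ 2 = 1
    rw [mul_pow, ha, hb, one_mul]
  inv_mem' := by
    intro a ha
    show a⁻¹ ^ 2 = 1
    rw [inv_pow, ha, inv_one]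

/-- The quotient `G/G²` (written `G/2G` in additive notation) of a commutative
group `G`. -/
def modSquares (G : Type*) [CommGroup G] : Type _ :=
  G ⧸ (powMonoidHom 2 : G →* G).range

instance (G : Type*) [CommGroup G] : CommGroup (modSquares G) :=
  inferInstanceAs (CommGroup (G ⧸ (powMonoidHom 2 : G →* G).range))

/-- The group `ℱ_L` of fractional ideals of a number field `L`. -/
abbrev FracIdealGroup (L : Type) [Field L] [NumberField L] : Type :=
  (FractionalIdeal (𝓞 L)⁰ L)ˣ

/-- For a subgroup `S ≤ L^×`, the subgroup `𝒫_L^S = {(α) : α ∈ S}` of principal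
fractional ideals with a generator in `S`. -/
def prinSub (S : Subgroup Lˣ) : Subgroup (FracIdealGroup L) :=
  S.map (toPrincipalIdeal (𝓞 L) L)

/-- The generalized ideal class group `ℱ_L/𝒫_L^S` attached to a subgroup `S ≤ L^×`;
for `S = L^×` this is the ideal class group `C_L`, for `S = P_L^+` the narrow class
group `C_L^+`, for `S = P_L^∞` the semi-narrow class group `C_L^∞`, and for
`S = P_L^0` the class group `C_L^0`. -/
def Cmod (S : Subgroup Lˣ) : Type _ := FracIdealGroup L ⧸ prinSub L S

instance (S : Subgroup Lˣ) : CommGroup (Cmod L S) :=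
  inferInstanceAs (CommGroup (FracIdealGroup L ⧸ prinSub L S))

/-- The square class group `L^×/(L^×)²`. -/
abbrev SqClasses (L : Type) [Field L] : Type := modSquares Lˣ

/-- The projection `L^× → L^×/(L^×)²`. -/
def mkSq : Lˣ →* SqClasses L :=
  QuotientGroup.mk' (powMonoidHom 2 : Lˣ →* Lˣ).range

/-- The subgroup of `L^×` of elements whose norm to `K` is a square in `K^×`. -/
def NormSq : Subgroup Lˣ :=
  Subgroup.comap (Units.map (Algebra.norm K : L →* K))
    (powMonoidHom 2 : Kˣ →* Kˣ).range

/-- An extension `S/R` is unramified at all (nonzero) finite primes: every nonzero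
prime of `S` has ramification index `1` over `R`. -/
def UnramAllFinite (R S : Type*) [CommRing R] [CommRing S] (f : R →+* S) : Prop :=
  ∀ P : Ideal S, P.IsPrime → P ≠ ⊥ →
    letI : Algebra R S := f.toAlgebra
    Ideal.ramificationIdx' (P.comap f) P = 1

/-- `L(√α)/L` is unramified at all finite primes:  whenever `M = L(s)` with
`s² = α`, the extension of the ring of integers of `L` inside `M` is unramified at
all nonzero primes. -/
def SqrtUnramified (α : L) : Prop :=
  ∀ (M : Type) (_ : Field M) (_ : Algebra L M) (s : M),
    s ^ 2 = algebraMap L M α → Algebra.adjoin L {s} = ⊤ →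
    letI : Algebra (𝓞 L) M := ((algebraMap L M).comp (algebraMap (𝓞 L) L)).toAlgebra
    UnramAllFinite (𝓞 L) (integralClosure (𝓞 L) M)
      (algebraMap (𝓞 L) (integralClosure (𝓞 L) M))

/-- The group `M_0` of square classes `[α] ∈ L^×/(L^×)²` such that `L(√α)/L` is
unramified at all finite primes and `α ∈ P_L^0`. -/
def M0 : Subgroup (SqClasses L) :=
  Subgroup.closure
    {x | ∃ α : Lˣ, mkSq L α = x ∧ SqrtUnramified L (α : L) ∧ α ∈ P0 L K dst}

/-- The group `M_∞` of square classes `[α] ∈ L^×/(L^×)²` such that `L(√α)/L` is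
unramified at all finite primes and `α ∈ P_L^∞`. -/
def Minf : Subgroup (SqClasses L) :=
  Subgroup.closure
    {x | ∃ α : Lˣ, mkSq L α = x ∧ SqrtUnramified L (α : L) ∧ α ∈ Pinf L K dst}

/-- The group `M_1` of square classes `[α] ∈ (L^×/(L^×)²)_{N=□}` such that `L(√α)/L`
is unramified at all finite primes and `α ∈ P_L^∞`. -/
def M1 : Subgroup (SqClasses L) :=
  Subgroup.closure
    {x | ∃ α : Lˣ, mkSq L α = x ∧ SqrtUnramified L (α : L) ∧ α ∈ Pinf L K dst ∧
      α ∈ NormSq L K}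

/-- The group `M_2` of square classes `[α] ∈ (L^×/(L^×)²)_{N=□}` such that
`(α) = I²` for some fractional ideal `I` and `α ∈ P_L^∞`. -/
def M2 : Subgroup (SqClasses L) where
  carrier :=
    {x | ∃ α : Lˣ, mkSq L α = x ∧
      (∃ I : FracIdealGroup L, toPrincipalIdeal (𝓞 L) L α = I ^ 2) ∧
      α ∈ Pinf L K dst ∧ α ∈ NormSq L K}
  one_mem' :=
    ⟨1, map_one _, ⟨1, by rw [map_one, one_pow]⟩, one_mem _, one_mem _⟩
  mul_mem' := by
    rintro x y ⟨α, rfl, ⟨I, hI⟩, hα1, hα2⟩ ⟨β, rfl, ⟨J, hJ⟩, hβ1, hβ2⟩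
    exact ⟨α * β, map_mul _ _ _, ⟨I * J, by rw [map_mul, hI, hJ, mul_pow]⟩,
      mul_mem hα1 hβ1, mul_mem hα2 hβ2⟩
  inv_mem' := by
    rintro x ⟨α, rfl, ⟨I, hI⟩, hα1, hα2⟩
    exact ⟨α⁻¹, map_inv _ _, ⟨I⁻¹, by rw [map_inv, hI, inv_pow]⟩,
      inv_mem hα1, inv_mem hα2⟩

/-- The natural projection `ℱ_L/𝒫_L^S → ℱ_L/𝒫_L^T` for `S ≤ T`. -/
def projCmod (S T : Subgroup Lˣ) (h : S ≤ T) : Cmod L S →* Cmod L T :=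
  QuotientGroup.map _ _ (MonoidHom.id _)
    (by
      intro x hx
      exact Subgroup.map_mono h hx)

/-- The map `π : C_L^∞[2] → C_L[2]` (or more generally the restriction of the
natural projection to `2`-torsion subgroups). -/
def pi2 (S T : Subgroup Lˣ) (h : S ≤ T) :
    twoTorsion (Cmod L S) →* twoTorsion (Cmod L T) :=
  MonoidHom.codRestrict ((projCmod L S T h).domRestrict (twoTorsion (Cmod L S)))
    (twoTorsion (Cmod L T))
    (by
      intro x
      show (projCmod L S T h) (x : Cmod L S) ^ 2 = 1
      rw [← map_pow]
      have hx : ((x : Cmod L S) : Cmod L S) ^ 2 = 1 := x.2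
      rw [hx, map_one])

/-- The image of the unit group `𝓞_L^×` in `L^×`. -/
def unitGroup : Subgroup Lˣ :=
  (Units.map (algebraMap (𝓞 L) L).toMonoidHom).range

/-- The image of the unit group `𝓞_K^×` in `L^×`. -/
def unitGroupBase : Subgroup Lˣ :=
  ((Units.map (algebraMap K L).toMonoidHom).comp
    (Units.map (algebraMap (𝓞 K) K).toMonoidHom)).range

/-- The map `γ : M₂ → C_L[2]` sends `[α]` with `(α) = I²` to the ideal class of
`I`.  This predicate singles out `γ` by that property (which in particular asserts
that `γ` is well defined). -/
def IsGammaMap [NumberField K] (γ : M2 L K dst →* twoTorsion (Cmod L ⊤)) : Prop :=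
  ∀ (α : Lˣ) (I : FracIdealGroup L)
    (h : toPrincipalIdeal (𝓞 L) L α = I ^ 2)
    (h1 : α ∈ Pinf L K dst) (h2 : α ∈ NormSq L K),
    (γ ⟨mkSq L α, ⟨α, rfl, ⟨I, h⟩, h1, h2⟩⟩ : Cmod L ⊤) = QuotientGroup.mk I



/-! ### Auxiliary material for Statement 8 -/

section Aux

lemma sgnAux_pos {x : ℝ} (h : 0 < x) : sgnAux x = 1 := if_pos h

lemma sgnAux_eq_one_iff {x : ℝ} (hx : x ≠ 0) : sgnAux x = 1 ↔ 0 < x := by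
  constructor
  · intro h
    by_contra hneg
    rw [sgnAux, if_neg hneg] at h
    exact absurd h (by decide)
  · exact sgnAux_pos

lemma sgnAux_prod {ι : Type*} (s : Finset ι) (f : ι → ℝ) (hf : ∀ i ∈ s, f i ≠ 0) :
    sgnAux (∏ i ∈ s, f i) = ∏ i ∈ s, sgnAux (f i) := by
  classical
  induction s using Finset.cons_induction with
  | empty => simp [sgnAux]
  | cons a s ha ih =>
    rw [Finset.prod_cons, Finset.prod_cons,
      sgnAux_mul (hf a (Finset.mem_cons_self a s))
        (Finset.prod_ne_zero_iff.2 fun i hi => hf i (Finset.mem_cons_of_mem hi)),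
      ih fun i hi => hf i (Finset.mem_cons_of_mem hi)]

lemma sgnAux_cube {t : ℝ} (h : t ≠ 0) : sgnAux (t ^ 3) = sgnAux t := by
  have h2 : t * t ≠ 0 := mul_ne_zero h h
  have : t ^ 3 = t * (t * t) := by ring
  rw [this, sgnAux_mul h h2, sgnAux_mul h h, Int.units_mul_self, mul_one]

lemma card_eq_range_mul_ker {G H : Type*} [Group G] [Group H] (f : G →* H) :
    Nat.card G = Nat.card f.range * Nat.card f.ker := by
  rw [Subgroup.card_eq_card_quotient_mul_card_subgroup f.ker,
    Nat.card_congr (QuotientGroup.quotientKerEquivRange f).toEquiv]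

lemma card_ker_restrict {G H : Type*} [Group G] [Group H] (f : G →* H) (A B : Subgroup G)
    (h : ∀ x, x ∈ A ∧ f x = 1 ↔ x ∈ B) :
    Nat.card ((f.domRestrict A).ker) = Nat.card B := by
  apply Nat.card_congr
  refine
    { toFun := fun x => ⟨x.1.1, (h x.1.1).1 ⟨x.1.2, x.2⟩⟩
      invFun := fun y => ⟨⟨y.1, ((h y.1).2 y.2).1⟩, ((h y.1).2 y.2).2⟩
      left_inv := fun x => by ext; rfl
      right_inv := fun y => rfl }

lemma range_restrict_map {G H : Type*} [Group G] [Group H] (f : G →* H) (A : Subgroup G) :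
    (f.domRestrict A).range = A.map f := by
  ext y
  constructor
  · rintro ⟨⟨x, hx⟩, rfl⟩
    exact ⟨x, hx, rfl⟩
  · rintro ⟨x, hx, rfl⟩
    exact ⟨⟨x, hx⟩, rfl⟩

variable (L : Type) [Field L] [NumberField L]

lemma fnL_sq (g : (L →+* ℝ) → ℤˣ) : g ^ 2 = 1 := funext fun τ => by
  rw [Pi.pow_apply]
  exact Int.units_sq _

lemma sqClasses_sq (x : SqClasses L) : x ^ 2 = 1 := by
  refine QuotientGroup.induction_on x ?_
  intro b
  have : ((QuotientGroup.mk b : SqClasses L)) ^ 2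
      = QuotientGroup.mk' (powMonoidHom 2 : Lˣ →* Lˣ).range (b ^ 2) :=
    (map_pow (QuotientGroup.mk' _) b 2)
  refine this.trans ?_
  exact (QuotientGroup.eq_one_iff _).2 ⟨b, rfl⟩

lemma mkSq_sq (β : Lˣ) : mkSq L (β ^ 2) = 1 := by
  rw [map_pow]
  exact sqClasses_sq L _

variable (K : Type) [Field K] [NumberField K] [Algebra K L]

lemma fnK_sq (g : (K →+* ℝ) → ℤˣ × ℤˣ) : g ^ 2 = 1 := funext fun σ => by
  rw [Pi.pow_apply]
  exact Prod.ext (by rw [Prod.pow_fst]; exact Int.units_sq _)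
    (by rw [Prod.pow_snd]; exact Int.units_sq _)

variable (dst : (K →+* ℝ) → (L →+* ℝ))

/-- The homomorphism recording, at each real place of `K`, the component at the distinguished
place together with the product of all components above it. -/
def Phi : ((L →+* ℝ) → ℤˣ) →* ((K →+* ℝ) → ℤˣ × ℤˣ) where
  toFun g := fun σ => (g (dst σ), ∏ᶠ τ ∈ extSet L K σ, g τ)
  map_one' := by
    funext σ
    simp
  map_mul' g h := by
    funext σ
    have hfin : (extSet L K σ).Finite := Set.toFinite _
    show (_, ∏ᶠ τ ∈ extSet L K σ, (g * h) τ)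
        = ((g (dst σ), ∏ᶠ τ ∈ extSet L K σ, g τ) * (h (dst σ), ∏ᶠ τ ∈ extSet L K σ, h τ))
    rw [Prod.mk_mul_mk]
    exact Prod.ext rfl (finprod_mem_mul_distrib hfin)

lemma ker_Phi : (Phi L K dst).ker = Vt L K dst := by
  ext g
  rw [MonoidHom.mem_ker]
  constructor
  · intro h σ
    have := congrFun h σ
    exact ⟨(Prod.ext_iff.1 this).1, (Prod.ext_iff.1 this).2⟩
  · intro h
    funext σ
    exact Prod.ext (h σ).1 (h σ).2

/-- The sign data descends to square classes. -/
def qhat : SqClasses L →* ((K →+* ℝ) → ℤˣ × ℤˣ) :=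
  QuotientGroup.lift ((powMonoidHom 2 : Lˣ →* Lˣ).range)
    ((Phi L K dst).comp (sgn L))
    (by
      rintro x ⟨β, rfl⟩
      show (Phi L K dst) (sgn L (β ^ 2)) = 1
      rw [map_pow, map_pow]
      exact fnK_sq K _)

lemma qhat_mk (t : Lˣ) : qhat L K dst (mkSq L t) = Phi L K dst (sgn L t) := rfl

/-- The second-component projection. -/
def psi : ((K →+* ℝ) → ℤˣ × ℤˣ) →* ((K →+* ℝ) → ℤˣ) where
  toFun g := fun σ => (g σ).2
  map_one' := rfl
  map_mul' _ _ := rfl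

lemma sq_mem_NormSq (β : Lˣ) : β ^ 2 ∈ NormSq L K := by
  refine ⟨Units.map (Algebra.norm K : L →* K) β, ?_⟩
  rw [powMonoidHom_apply, map_pow]

lemma mem_Pinf_iff (t : Lˣ) : t ∈ Pinf L K dst ↔ sgn L t ∈ Vt L K dst := Subgroup.mem_comap

lemma toPrincipalIdeal_unitGroup (z : (𝓞 L)ˣ) :
    toPrincipalIdeal (𝓞 L) L (Units.map (algebraMap (𝓞 L) L).toMonoidHom z) = 1 := by
  rw [toPrincipalIdeal_eq_iff]
  have h1 : (1 : (FractionalIdeal (𝓞 L)⁰ L)ˣ).val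
      = FractionalIdeal.spanSingleton (𝓞 L)⁰ (1 : L) := by
    rw [FractionalIdeal.spanSingleton_one]
    rfl
  rw [h1, FractionalIdeal.spanSingleton_eq_spanSingleton]
  exact ⟨z⁻¹, by
    show ((z⁻¹ : (𝓞 L)ˣ) : 𝓞 L) • ((Units.map (algebraMap (𝓞 L) L).toMonoidHom z : Lˣ) : L) = 1
    rw [Algebra.smul_def]
    show algebraMap (𝓞 L) L ((z⁻¹ : (𝓞 L)ˣ) : 𝓞 L) * algebraMap (𝓞 L) L ((z : (𝓞 L)ˣ) : 𝓞 L) = 1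
    rw [← map_mul]
    simp⟩

lemma norm_unitGroup [FiniteDimensional K L] (u : Lˣ) (hu : u ∈ unitGroup L) :
    ∃ z : (𝓞 K)ˣ, algebraMap (𝓞 K) K z = Algebra.norm K (u : L) := by
  obtain ⟨w, hw⟩ := hu
  have hval : ((u : Lˣ) : L) = algebraMap (𝓞 L) L (w : 𝓞 L) := by rw [← hw]; rfl
  have hvalinv : ((u⁻¹ : Lˣ) : L) = algebraMap (𝓞 L) L ((w⁻¹ : (𝓞 L)ˣ) : 𝓞 L) := by
    rw [← hw]
    rfl
  have h1 : IsIntegral ℤ (Algebra.norm K ((u : Lˣ) : L)) := by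
    rw [hval]
    exact Algebra.isIntegral_norm K (RingOfIntegers.isIntegral_coe _)
  have h2 : IsIntegral ℤ (Algebra.norm K ((u⁻¹ : Lˣ) : L)) := by
    rw [hvalinv]
    exact Algebra.isIntegral_norm K (RingOfIntegers.isIntegral_coe _)
  let a : 𝓞 K := ⟨_, h1⟩
  let b : 𝓞 K := ⟨_, h2⟩
  have hab : a * b = 1 := by
    have : Algebra.norm K ((u : Lˣ) : L) * Algebra.norm K ((u⁻¹ : Lˣ) : L) = 1 := by
      rw [← map_mul]
      simp
    exact Subtype.ext this
  exact ⟨Units.mkOfMulEqOne a b hab, rfl⟩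

lemma base_mem_unitGroup (x : Kˣ) (z : (𝓞 K)ˣ)
    (hz : algebraMap (𝓞 K) K (z : 𝓞 K) = (x : K)) :
    Units.map (algebraMap K L).toMonoidHom x ∈ unitGroup L := by
  have hzinv : algebraMap (𝓞 K) K ((z⁻¹ : (𝓞 K)ˣ) : 𝓞 K) = ((x : K))⁻¹ := by
    refine eq_inv_of_mul_eq_one_left ?_
    rw [← hz, ← map_mul]
    simp
  have h1 : IsIntegral ℤ (algebraMap K L (x : K)) := by
    rw [← hz]
    exact (RingOfIntegers.isIntegral_coe _).map (algebraMap K L).toIntAlgHom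
  have h2 : IsIntegral ℤ (algebraMap K L ((x : K))⁻¹) := by
    rw [← hzinv]
    exact (RingOfIntegers.isIntegral_coe _).map (algebraMap K L).toIntAlgHom
  let a : 𝓞 L := ⟨_, h1⟩
  let b : 𝓞 L := ⟨_, h2⟩
  have hab : a * b = 1 := by
    have : algebraMap K L (x : K) * algebraMap K L ((x : K))⁻¹ = 1 := by
      rw [← map_mul, mul_inv_cancel₀ (Units.ne_zero x), map_one]
    exact Subtype.ext this
  exact ⟨Units.mkOfMulEqOne a b hab, Units.ext rfl⟩

lemma norm_base_cube (hdeg : Module.finrank K L = 3) (x : Kˣ) :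
    Units.map (Algebra.norm K : L →* K) (Units.map (algebraMap K L).toMonoidHom x) = x ^ 3 := by
  apply Units.ext
  show Algebra.norm K (algebraMap K L (x : K)) = ((x ^ 3 : Kˣ) : K)
  rw [Algebra.norm_algebraMap, hdeg, Units.val_pow_eq_pow_val]

lemma finite_map_mkSq (T : Subgroup Lˣ) (hT : T ≤ unitGroup L) :
    Finite (Subgroup.map (mkSq L) T) := by
  let c : (𝓞 L)ˣ →* SqClasses L := (mkSq L).comp (Units.map (algebraMap (𝓞 L) L).toMonoidHom)
  haveI : Group.FG (𝓞 L)ˣ := Group.fg_iff_monoid_fg.mpr inferInstance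
  have htor : Monoid.IsTorsion c.range := by
    intro x
    refine isOfFinOrder_iff_pow_eq_one.2 ⟨2, two_pos, ?_⟩
    apply Subtype.ext
    rw [SubmonoidClass.coe_pow]
    exact sqClasses_sq L _
  haveI : Finite c.range := CommGroup.finite_of_fg_torsion _ htor
  have hle : Subgroup.map (mkSq L) T ≤ c.range := by
    rintro _ ⟨t, ht, rfl⟩
    obtain ⟨z, hz⟩ := hT ht
    exact ⟨z, by rw [← hz]; rfl⟩
  exact Finite.of_injective _ (Subgroup.inclusion_injective hle)

lemma sgnAux_norm [FiniteDimensional K L] (σ : K →+* ℝ) (u : Lˣ) :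
    (∏ᶠ τ ∈ extSet L K σ, sgnAux (τ (u : L))) = sgnAux (σ (Algebra.norm K (u : L))) := by
  classical
  letI : Algebra K ℂ := ((Complex.ofRealHom : ℝ →+* ℂ).comp σ).toAlgebra
  have halg : ∀ c : K, algebraMap K ℂ c = ((σ c : ℝ) : ℂ) := fun c => rfl
  have key := Algebra.norm_eq_prod_embeddings K ℂ (u : L)
  have hconj_alg : ∀ c : K,
      (starRingEnd ℂ) (algebraMap K ℂ c) = algebraMap K ℂ c := by
    intro c
    rw [halg, Complex.conj_ofReal]
  let J : (L →ₐ[K] ℂ) → (L →ₐ[K] ℂ) := fun φ =>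
    { toRingHom := ((starRingEnd ℂ : ℂ →+* ℂ).comp (φ : L →+* ℂ))
      commutes' := fun c => by
        show (starRingEnd ℂ) (φ (algebraMap K L c)) = algebraMap K ℂ c
        rw [AlgHom.commutes]
        exact hconj_alg c }
  have hJval : ∀ (φ : L →ₐ[K] ℂ) (x : L), (J φ) x = (starRingEnd ℂ) (φ x) := fun _ _ => rfl
  have hJJ : ∀ φ, J (J φ) = φ := by
    intro φ; ext x
    show (starRingEnd ℂ) ((starRingEnd ℂ) (φ x)) = φ x
    exact Complex.conj_conj _
  let p : (L →ₐ[K] ℂ) → Prop := fun φ => ComplexEmbedding.IsReal (φ : L →+* ℂ)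
  have hp_iff : ∀ φ, p φ ↔ J φ = φ := by
    intro φ
    constructor
    · intro h; ext x
      rw [hJval]
      exact RingHom.congr_fun (ComplexEmbedding.isReal_iff.1 h) x
    · intro h
      show ComplexEmbedding.IsReal (φ : L →+* ℂ)
      rw [ComplexEmbedding.isReal_iff]
      ext x
      have := congrArg (fun ψ : L →ₐ[K] ℂ => ψ x) h
      simpa [hJval] using this
  have huL : (u : L) ≠ 0 := Units.ne_zero u
  have hune : ∀ φ : L →ₐ[K] ℂ, φ (u : L) ≠ 0 := fun φ =>
    (map_ne_zero (φ : L →+* ℂ)).2 huL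
  have hs : (extSet L K σ).Finite := Set.toFinite _
  have hreal : (∏ τ ∈ hs.toFinset, (((τ (u : L) : ℝ)) : ℂ)) =
      ∏ φ ∈ Finset.univ.filter p, φ (u : L) := by
    refine Finset.prod_bij
      (fun τ hτ =>
        ({ toRingHom := (Complex.ofRealHom : ℝ →+* ℂ).comp τ
           commutes' := fun c => by
             show ((τ (algebraMap K L c) : ℝ) : ℂ) = algebraMap K ℂ c
             have : τ.comp (algebraMap K L) = σ := by
               simpa [extSet] using hs.mem_toFinset.1 hτ
             rw [halg, ← this]
             rfl } : L →ₐ[K] ℂ)) ?_ ?_ ?_ ?_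
    · intro τ hτ
      rw [Finset.mem_filter]
      refine ⟨Finset.mem_univ _, ?_⟩
      show ComplexEmbedding.IsReal _
      rw [ComplexEmbedding.isReal_iff]
      ext x
      show (starRingEnd ℂ) ((τ x : ℝ) : ℂ) = ((τ x : ℝ) : ℂ)
      exact Complex.conj_ofReal _
    · intro τ₁ h₁ τ₂ h₂ h
      ext x
      have := congrArg (fun ψ : L →ₐ[K] ℂ => ψ x) h
      exact Complex.ofReal_injective (by simpa using this)
    · intro φ hφ
      have hpφ : p φ := (Finset.mem_filter.1 hφ).2
      have hemb : ∀ x : L, ((hpφ.embedding x : ℝ) : ℂ) = φ x := fun x =>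
        ComplexEmbedding.IsReal.coe_embedding_apply hpφ x
      refine ⟨hpφ.embedding, ?_, ?_⟩
      · rw [hs.mem_toFinset]
        show hpφ.embedding.comp (algebraMap K L) = σ
        ext c
        refine Complex.ofReal_injective ?_
        show ((hpφ.embedding (algebraMap K L c) : ℝ) : ℂ) = ((σ c : ℝ) : ℂ)
        rw [hemb, ← halg c]
        exact (φ.commutes c)
      · ext x
        show ((hpφ.embedding x : ℝ) : ℂ) = φ x
        exact hemb x
    · intro τ hτ
      rfl
  set s' := Finset.univ.filter (fun φ : L →ₐ[K] ℂ => ¬ p φ) with hs'def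
  set r := ∏ φ ∈ s', ‖φ (u : L)‖ with hrdef
  have hrpos : 0 < r := Finset.prod_pos fun φ _ => norm_pos_iff.2 (hune φ)
  have habs_ne : ∀ φ : L →ₐ[K] ℂ, (‖φ (u : L)‖ : ℂ) ≠ 0 := fun φ => by
    exact_mod_cast (norm_pos_iff.2 (hune φ)).ne'
  have hnonreal : (∏ φ ∈ s', φ (u : L)) = (r : ℂ) := by
    have hsplit : ∀ φ : L →ₐ[K] ℂ,
        φ (u : L) = (φ (u : L) / (‖φ (u : L)‖ : ℂ)) *
          (‖φ (u : L)‖ : ℂ) := fun φ =>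
      (div_mul_cancel₀ _ (habs_ne φ)).symm
    calc (∏ φ ∈ s', φ (u : L))
        = ∏ φ ∈ s', ((φ (u : L) / (‖φ (u : L)‖ : ℂ)) *
            (‖φ (u : L)‖ : ℂ)) := Finset.prod_congr rfl fun φ _ => hsplit φ
      _ = (∏ φ ∈ s', (φ (u : L) / (‖φ (u : L)‖ : ℂ))) *
            ∏ φ ∈ s', (‖φ (u : L)‖ : ℂ) := Finset.prod_mul_distrib
      _ = (r : ℂ) := by
          have h1 : (∏ φ ∈ s', (φ (u : L) / (‖φ (u : L)‖ : ℂ))) = 1 := by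
            refine Finset.prod_involution (fun φ _ => J φ) ?_ ?_ ?_ ?_
            · intro φ hφ
              rw [div_mul_div_comm, hJval]
              rw [Complex.norm_conj, Complex.mul_conj, ← Complex.ofReal_mul,
                ← Complex.sq_norm, ← sq]
              exact div_self (by
                exact_mod_cast pow_ne_zero 2 ((norm_pos_iff.2 (hune φ)).ne'))
            · intro φ hφ _
              intro hJeq
              exact (Finset.mem_filter.1 hφ).2 ((hp_iff φ).2 hJeq)
            · intro φ hφ
              refine Finset.mem_filter.2 ⟨Finset.mem_univ _, ?_⟩
              intro hpJ
              have := (hp_iff (J φ)).1 hpJ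
              rw [hJJ φ] at this
              exact (Finset.mem_filter.1 hφ).2 ((hp_iff φ).2 this.symm)
            · intro φ hφ
              exact hJJ φ
          rw [h1, one_mul, hrdef]
          push_cast
          rfl
  have hcomb : ((σ (Algebra.norm K (u : L)) : ℝ) : ℂ) =
      (((∏ τ ∈ hs.toFinset, τ (u : L)) * r : ℝ) : ℂ) := by
    rw [← halg, key, ← Finset.prod_filter_mul_prod_filter_not Finset.univ p
      (fun φ => φ (u : L)), ← hreal, ← hs'def, hnonreal]
    push_cast
    rfl
  have heq : σ (Algebra.norm K (u : L)) = (∏ τ ∈ hs.toFinset, τ (u : L)) * r :=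
    Complex.ofReal_injective hcomb
  have htne : ∀ τ ∈ hs.toFinset, τ (u : L) ≠ 0 := fun τ _ =>
    (map_ne_zero τ).2 huL
  rw [heq, sgnAux_mul (Finset.prod_ne_zero_iff.2 htne) hrpos.ne', sgnAux_pos hrpos,
    mul_one, sgnAux_prod _ _ htne]
  have hfin := finprod_mem_coe_finset (fun τ : L →+* ℝ => sgnAux (τ (u : L))) hs.toFinset
  rw [Set.Finite.coe_toFinset hs] at hfin
  exact hfin

end Aux


section Steps

variable (K L : Type) [Field K] [NumberField K] [Field L] [NumberField L] [Algebra K L]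
variable (dst : (K →+* ℝ) → (L →+* ℝ))

lemma stepA (γ : M2 L K dst →* twoTorsion (Cmod L (⊤ : Subgroup Lˣ)))
    (hγ : IsGammaMap L K dst γ) :
    Nat.card γ.ker
      = Nat.card (Subgroup.map (mkSq L) (unitGroup L ⊓ NormSq L K ⊓ Pinf L K dst)) := by
  apply Nat.card_congr
  have main : ∀ x : γ.ker, ((x : M2 L K dst) : SqClasses L)
      ∈ Subgroup.map (mkSq L) (unitGroup L ⊓ NormSq L K ⊓ Pinf L K dst) := by
    intro x
    obtain ⟨α, hα, ⟨I, hI⟩, h1, h2⟩ := x.1.2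
    have hker : γ x.1 = 1 := MonoidHom.mem_ker.mp x.2
    have hx1 : (x.1 : M2 L K dst) = ⟨mkSq L α, ⟨α, rfl, ⟨I, hI⟩, h1, h2⟩⟩ :=
      Subtype.ext hα.symm
    have hmkI : (QuotientGroup.mk I : Cmod L (⊤ : Subgroup Lˣ)) = 1 := by
      rw [← hγ α I hI h1 h2, ← hx1, hker]
      rfl
    have hIprin : I ∈ prinSub L (⊤ : Subgroup Lˣ) := (QuotientGroup.eq_one_iff I).1 hmkI
    obtain ⟨β, -, hβ⟩ := hIprin
    have hαβ : toPrincipalIdeal (𝓞 L) L α = toPrincipalIdeal (𝓞 L) L (β ^ 2) := by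
      rw [map_pow, hβ, hI]
    obtain ⟨z, hz⟩ : ∃ z : (𝓞 L)ˣ, z • ((α : Lˣ) : L) = ((β ^ 2 : Lˣ) : L) := by
      rw [toPrincipalIdeal_eq_iff, coe_toPrincipalIdeal] at hαβ
      exact FractionalIdeal.spanSingleton_eq_spanSingleton.1 hαβ
    have hz' : algebraMap (𝓞 L) L (z : 𝓞 L) * ((α : Lˣ) : L) = ((β ^ 2 : Lˣ) : L) := by
      rw [← Algebra.smul_def]
      exact hz
    set g : Lˣ := α * (β⁻¹) ^ 2 with hgdef
    have hzg : (Units.map (algebraMap (𝓞 L) L).toMonoidHom z) * g = 1 := by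
      apply Units.ext
      have e1 : ((g : Lˣ) : L) = ((α : Lˣ) : L) * (((β⁻¹ ^ 2 : Lˣ)) : L) := rfl
      show algebraMap (𝓞 L) L (z : 𝓞 L) * ((g : Lˣ) : L) = 1
      rw [e1, ← mul_assoc, hz']
      have e2 : ((β ^ 2 : Lˣ) : L) * ((β⁻¹ ^ 2 : Lˣ) : L) = (((β ^ 2) * (β⁻¹ ^ 2) : Lˣ) : L) :=
        (Units.val_mul _ _).symm
      rw [e2, ← mul_pow, mul_inv_cancel, one_pow, Units.val_one]
    have hgU : g ∈ unitGroup L := by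
      have : g = (Units.map (algebraMap (𝓞 L) L).toMonoidHom z)⁻¹ :=
        (inv_eq_of_mul_eq_one_right hzg).symm
      rw [this]
      exact inv_mem ⟨z, rfl⟩
    have hgN : g ∈ NormSq L K := mul_mem h2 (sq_mem_NormSq L K β⁻¹)
    have hgP : g ∈ Pinf L K dst := by
      rw [mem_Pinf_iff, hgdef, map_mul, map_pow, fnL_sq L (sgn L β⁻¹), mul_one]
      exact (mem_Pinf_iff L K dst α).1 h1
    refine ⟨g, Subgroup.mem_inf.mpr ⟨Subgroup.mem_inf.mpr ⟨hgU, hgN⟩, hgP⟩, ?_⟩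
    rw [hgdef, map_mul, map_pow, sqClasses_sq L (mkSq L β⁻¹), mul_one]
    exact hα
  refine Equiv.ofBijective (fun x => ⟨((x : M2 L K dst) : SqClasses L), main x⟩) ⟨?_, ?_⟩
  · intro x y hxy
    have h1 := Subtype.ext_iff.mp hxy
    exact Subtype.ext (Subtype.ext h1)
  · rintro ⟨y, hy⟩
    obtain ⟨g, hmem, hg⟩ := hy
    obtain ⟨hmem1, hgP⟩ := Subgroup.mem_inf.mp hmem
    obtain ⟨hgU, hgN⟩ := Subgroup.mem_inf.mp hmem1
    obtain ⟨z, hz⟩ := hgU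
    have hprin : toPrincipalIdeal (𝓞 L) L g = 1 ^ 2 := by
      rw [one_pow, ← hz]
      exact toPrincipalIdeal_unitGroup L z
    have m2 : mkSq L g ∈ M2 L K dst := ⟨g, rfl, ⟨1, hprin⟩, hgP, hgN⟩
    have hone : γ ⟨mkSq L g, m2⟩ = 1 := by
      apply Subtype.ext
      exact (hγ g 1 hprin hgP hgN).trans rfl
    exact ⟨⟨⟨mkSq L g, m2⟩, MonoidHom.mem_ker.mpr hone⟩, Subtype.ext hg⟩

lemma stepB (T : Subgroup Lˣ) (hT : T ≤ unitGroup L) :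
    Nat.card (Subgroup.map (mkSq L) T)
      = Nat.card (Subgroup.map ((Phi L K dst).comp (sgn L)) T)
        * Nat.card (Subgroup.map (mkSq L) (T ⊓ Pinf L K dst)) := by
  haveI : Finite (Subgroup.map (mkSq L) T) := finite_map_mkSq L T hT
  rw [card_eq_range_mul_ker ((qhat L K dst).domRestrict (Subgroup.map (mkSq L) T))]
  congr 1
  · rw [range_restrict_map, Subgroup.map_map]
    have hcomp : (qhat L K dst).comp (mkSq L) = (Phi L K dst).comp (sgn L) :=
      MonoidHom.ext fun t => rfl
    rw [hcomp]
  · refine card_ker_restrict (qhat L K dst) _ _ ?_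
    intro x
    constructor
    · rintro ⟨⟨t, ht, rfl⟩, h1⟩
      refine ⟨t, Subgroup.mem_inf.mpr ⟨ht, ?_⟩, rfl⟩
      rw [mem_Pinf_iff, ← ker_Phi L K dst]
      exact MonoidHom.mem_ker.mpr h1
    · rintro ⟨t, htmem, rfl⟩
      obtain ⟨ht, htP⟩ := Subgroup.mem_inf.mp htmem
      refine ⟨⟨t, ht, rfl⟩, ?_⟩
      show qhat L K dst (mkSq L t) = 1
      rw [qhat_mk]
      have : sgn L t ∈ (Phi L K dst).ker := by
        rw [ker_Phi]
        exact (mem_Pinf_iff L K dst t).1 htP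
      exact MonoidHom.mem_ker.mp this

lemma stepC [FiniteDimensional K L] (hdeg : Module.finrank K L = 3)
    (hdst : ∀ σ : K →+* ℝ, (dst σ).comp (algebraMap K L) = σ) :
    Nat.card (Subgroup.map ((Phi L K dst).comp (sgn L)) (unitGroup L))
      = Nat.card (Subgroup.map (sgn K) (unitGroup K))
        * Nat.card (Subgroup.map ((Phi L K dst).comp (sgn L)) (unitGroup L ⊓ NormSq L K)) := by
  rw [card_eq_range_mul_ker
    ((psi K).domRestrict (Subgroup.map ((Phi L K dst).comp (sgn L)) (unitGroup L)))]
  congr 1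
  · rw [range_restrict_map, Subgroup.map_map]
    have heq : Subgroup.map ((psi K).comp ((Phi L K dst).comp (sgn L))) (unitGroup L)
        = Subgroup.map (sgn K) (unitGroup K) := by
      ext x
      constructor
      · rintro ⟨u, hu, rfl⟩
        obtain ⟨z, hz⟩ := norm_unitGroup L K u hu
        refine ⟨Units.map (algebraMap (𝓞 K) K).toMonoidHom z, ⟨z, rfl⟩, ?_⟩
        funext σ
        show sgnAux (σ (algebraMap (𝓞 K) K (z : 𝓞 K))) = (Phi L K dst (sgn L u) σ).2
        rw [hz]
        exact (sgnAux_norm L K σ u).symm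
      · rintro ⟨y, hy, rfl⟩
        obtain ⟨z, hz⟩ := hy
        have hzval : algebraMap (𝓞 K) K (z : 𝓞 K) = (y : K) := by rw [← hz]; rfl
        refine ⟨Units.map (algebraMap K L).toMonoidHom y,
          base_mem_unitGroup L K y z hzval, ?_⟩
        funext σ
        show (Phi L K dst (sgn L (Units.map (algebraMap K L).toMonoidHom y)) σ).2
            = sgnAux (σ (y : K))
        have h1 : (Phi L K dst (sgn L (Units.map (algebraMap K L).toMonoidHom y)) σ).2
            = sgnAux (σ (Algebra.norm K
                ((Units.map (algebraMap K L).toMonoidHom y : Lˣ) : L))) :=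
          sgnAux_norm L K σ _
        have h2 : Algebra.norm K ((Units.map (algebraMap K L).toMonoidHom y : Lˣ) : L)
            = (y : K) ^ 3 := by
          show Algebra.norm K (algebraMap K L (y : K)) = (y : K) ^ 3
          rw [Algebra.norm_algebraMap, hdeg]
        rw [h1, h2, map_pow]
        exact sgnAux_cube ((map_ne_zero σ).2 (Units.ne_zero y))
    rw [heq]
  · refine card_ker_restrict (psi K) _ _ ?_
    intro x
    constructor
    · rintro ⟨⟨u, huU, rfl⟩, hpsi⟩
      have hNne : Algebra.norm K ((u : Lˣ) : L) ≠ 0 :=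
        IsUnit.ne_zero ⟨Units.map (Algebra.norm K : L →* K) u, rfl⟩
      have hNpos : ∀ σ : K →+* ℝ, 0 < σ (Algebra.norm K ((u : Lˣ) : L)) := by
        intro σ
        have h2 := congrFun hpsi σ
        have h3 : sgnAux (σ (Algebra.norm K ((u : Lˣ) : L))) = 1 := by
          rw [← sgnAux_norm L K σ u]
          exact h2
        exact (sgnAux_eq_one_iff ((map_ne_zero σ).2 hNne)).1 h3
      obtain ⟨z, hz⟩ := norm_unitGroup L K u huU
      set ν : Kˣ := Units.map (Algebra.norm K : L →* K) u with hν
      have hνval : (ν : K) = Algebra.norm K ((u : Lˣ) : L) := rfl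
      set c : Lˣ := Units.map (algebraMap K L).toMonoidHom ν with hc
      have hcU : c ∈ unitGroup L := base_mem_unitGroup L K ν z (by rw [hz, hνval])
      have hcN : Units.map (Algebra.norm K : L →* K) c = ν ^ 3 := norm_base_cube L K hdeg ν
      refine ⟨u * c, Subgroup.mem_inf.mpr ⟨mul_mem huU hcU, ⟨ν ^ 2, ?_⟩⟩, ?_⟩
      · show (ν ^ 2) ^ 2 = Units.map (Algebra.norm K : L →* K) (u * c)
        rw [map_mul, hcN, ← hν]
        group
      · show ((Phi L K dst).comp (sgn L)) (u * c) = ((Phi L K dst).comp (sgn L)) u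
        rw [map_mul]
        have hone : ((Phi L K dst).comp (sgn L)) c = 1 := by
          funext σ
          refine Prod.ext ?_ ?_
          · show sgnAux (dst σ ((c : Lˣ) : L)) = 1
            have hd : dst σ ((c : Lˣ) : L) = σ (ν : K) :=
              RingHom.congr_fun (hdst σ) (ν : K)
            rw [hd, hνval]
            exact sgnAux_pos (hNpos σ)
          · show (∏ᶠ τ ∈ extSet L K σ, sgnAux (τ ((c : Lˣ) : L))) = 1
            rw [sgnAux_norm L K σ c]
            have hn : Algebra.norm K ((c : Lˣ) : L) = (ν : K) ^ 3 := by
              show Algebra.norm K (algebraMap K L (ν : K)) = (ν : K) ^ 3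
              rw [Algebra.norm_algebraMap, hdeg]
            have hνne : (ν : K) ≠ 0 := Units.ne_zero ν
            rw [hn, map_pow, sgnAux_cube ((map_ne_zero σ).2 hνne), hνval]
            exact sgnAux_pos (hNpos σ)
        rw [hone, mul_one]
    · rintro ⟨t, htmem, rfl⟩
      obtain ⟨htU, htN⟩ := Subgroup.mem_inf.mp htmem
      refine ⟨⟨t, htU, rfl⟩, ?_⟩
      funext σ
      show (∏ᶠ τ ∈ extSet L K σ, sgnAux (τ ((t : Lˣ) : L))) = 1
      rw [sgnAux_norm L K σ t]
      obtain ⟨w, hw⟩ := htN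
      have hwval : ((w : Kˣ) : K) ^ 2 = Algebra.norm K ((t : Lˣ) : L) := by
        have h := congrArg (Units.val) hw
        rw [powMonoidHom_apply, Units.val_pow_eq_pow_val] at h
        exact h
      rw [← hwval, map_pow]
      exact sgnAux_pos (pow_two_pos_of_ne_zero ((map_ne_zero σ).2 (Units.ne_zero w)))

lemma stepD :
    Nat.card ((Subgroup.map (sgn L) (unitGroup L) ⊔ Vt L K dst : Subgroup ((L →+* ℝ) → ℤˣ)))
      = Nat.card (Subgroup.map ((Phi L K dst).comp (sgn L)) (unitGroup L))
        * Nat.card (Vt L K dst) := by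
  rw [card_eq_range_mul_ker
    ((Phi L K dst).domRestrict (Subgroup.map (sgn L) (unitGroup L) ⊔ Vt L K dst))]
  congr 1
  · rw [range_restrict_map, Subgroup.map_sup, Subgroup.map_map]
    have hV : Subgroup.map (Phi L K dst) (Vt L K dst) = ⊥ :=
      (Subgroup.map_eq_bot_iff _).2 (le_of_eq (ker_Phi L K dst).symm)
    rw [hV, sup_bot_eq]
  · refine card_ker_restrict (Phi L K dst) _ _ ?_
    intro x
    constructor
    · rintro ⟨-, h1⟩
      have : x ∈ (Phi L K dst).ker := MonoidHom.mem_ker.mpr h1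
      rwa [ker_Phi] at this
    · intro hx
      refine ⟨(le_sup_right : Vt L K dst ≤ _) hx, ?_⟩
      have : x ∈ (Phi L K dst).ker := by
        rw [ker_Phi]
        exact hx
      exact MonoidHom.mem_ker.mp this

lemma stepE (hdst : ∀ σ : K →+* ℝ, (dst σ).comp (algebraMap K L) = σ) :
    Nat.card (Subgroup.map (sgn L) (unitGroupBase L K))
      = Nat.card (Subgroup.map (sgn K) (unitGroup K)) := by
  let Θ : ((K →+* ℝ) → ℤˣ) →* ((L →+* ℝ) → ℤˣ) :=
    { toFun := fun h τ => h (τ.comp (algebraMap K L))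
      map_one' := rfl
      map_mul' := fun _ _ => rfl }
  have hinj : Function.Injective Θ := by
    intro a b hab
    funext σ
    have h := congrFun hab (dst σ)
    show a σ = b σ
    rw [← hdst σ]
    exact h
  have hmap : Subgroup.map Θ (Subgroup.map (sgn K) (unitGroup K))
      = Subgroup.map (sgn L) (unitGroupBase L K) := by
    rw [Subgroup.map_map]
    ext x
    constructor
    · rintro ⟨y, ⟨z, rfl⟩, rfl⟩
      exact ⟨Units.map (algebraMap K L).toMonoidHom
          (Units.map (algebraMap (𝓞 K) K).toMonoidHom z), ⟨z, rfl⟩, by funext τ; rfl⟩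
    · rintro ⟨w, ⟨z, rfl⟩, rfl⟩
      exact ⟨Units.map (algebraMap (𝓞 K) K).toMonoidHom z, ⟨z, rfl⟩, by funext τ; rfl⟩
  rw [← hmap]
  exact (Nat.card_congr (Subgroup.equivMapOfInjective _ Θ hinj).toEquiv).symm

end Steps

/-- `|ker(γ)| = |(𝓞_L^×/(𝓞_L^×)²)_{N=□}|·|Ṽ|·|sgn(𝓞_K^×)| / |sgn(𝓞_L^×)·Ṽ|`. -/
theorem statement8
    (K L : Type) [Field K] [NumberField K] [Field L] [NumberField L] [Algebra K L]
    (hdeg : Module.finrank K L = 3)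
    (dst : (K →+* ℝ) → (L →+* ℝ))
    (hdst : ∀ σ : K →+* ℝ, (dst σ).comp (algebraMap K L) = σ)
    (γ : M2 L K dst →* twoTorsion (Cmod L (⊤ : Subgroup Lˣ)))
    (hγ : IsGammaMap L K dst γ) :
    Nat.card γ.ker =
      Nat.card (Subgroup.map (mkSq L) (unitGroup L ⊓ NormSq L K)) *
        Nat.card (Vt L K dst) *
        Nat.card (Subgroup.map (sgn L) (unitGroupBase L K)) /
        Nat.card ↥(Subgroup.map (sgn L) (unitGroup L) ⊔ Vt L K dst) := by
  haveI : FiniteDimensional K L :=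
    FiniteDimensional.of_finrank_pos (by rw [hdeg]; norm_num)
  have hA := stepA K L dst γ hγ
  have hB := stepB K L dst (unitGroup L ⊓ NormSq L K) inf_le_left
  have hC := stepC K L dst hdeg hdst
  have hD := stepD K L dst
  have hE := stepE K L dst hdst
  rw [hA, hB, hE, hD, hC]
  set a := Nat.card (Subgroup.map ((Phi L K dst).comp (sgn L)) (unitGroup L ⊓ NormSq L K))
    with ha
  set b := Nat.card (Subgroup.map (sgn K) (unitGroup K)) with hb
  set v := Nat.card (Vt L K dst) with hv
  set k := Nat.card
    (Subgroup.map (mkSq L) (unitGroup L ⊓ NormSq L K ⊓ Pinf L K dst)) with hk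
  have hapos : 0 < a := Nat.card_pos
  have hbpos : 0 < b := Nat.card_pos
  have hvpos : 0 < v := Nat.card_pos
  have harith : a * k * v * b = k * (b * a * v) := by ring
  rw [harith, Nat.mul_div_cancel _ (by positivity)]

end Paper

end
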